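/- If (h,g) ∈ ℂ² satisfies (3h² + 2g)·g ≠ 0, then the fibre F_{(h,g)} of the undeformed DGR moment map is smooth: at every point x ∈ ℂ⁴ with H(x) = h and G(x) = g, the gradient vectors ∇H(x) = (∂H/∂q, ∂H/∂Q, ∂H/∂p, ∂H/∂P)(x) and ∇G(x) are linearly independent over ℂ (equivalently, the 2×4 Jacobian matrix of (H,G) at x has rank 2). -/
import Mathlib


open MvPolynomial

/-- Polynomial ring ℂ[q,Q,p,P]: variable 0 = q, 1 = Q, 2 = p, 3 = P. -/
noncomputable abbrev q : MvPolynomial (Fin 4) ℂ := X 0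
noncomputable abbrev Qv : MvPolynomial (Fin 4) ℂ := X 1
noncomputable abbrev p : MvPolynomial (Fin 4) ℂ := X 2
noncomputable abbrev Pv : MvPolynomial (Fin 4) ℂ := X 3

/-- The undeformed DGR Hamiltonian H. -/
noncomputable def H : MvPolynomial (Fin 4) ℂ :=
  C (1/2 : ℂ) * (p ^ 2 - C (1/3 : ℂ) * Pv ^ 2) + q ^ 3
    - C (3/2 : ℂ) * q * Qv ^ 2 + C (1/2 : ℂ) * Qv ^ 3

/-- The undeformed DGR second integral G. -/
noncomputable def G : MvPolynomial (Fin 4) ℂ :=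
  C (1/9 : ℂ) * (p - C (1/2 : ℂ) * Pv) * Pv ^ 3
    - C (3/2 : ℂ) * Qv ^ 3 * p ^ 2
    - C (3/2 : ℂ) * q * Qv ^ 2 * p * Pv
    - C (3/2 : ℂ) * Qv ^ 3 * p * Pv
    + (-(q ^ 2 * Qv) - q * Qv ^ 2 + C (1/2 : ℂ) * Qv ^ 3) * Pv ^ 2
    - C (3/2 : ℂ) * q ^ 3 * Qv ^ 3 + C (9/8 : ℂ) * q ^ 2 * Qv ^ 4
    + C (9/4 : ℂ) * q * Qv ^ 5 - C (15/8 : ℂ) * Qv ^ 6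

/-- The gradient of a polynomial F ∈ ℂ[q,Q,p,P] at a point x ∈ ℂ⁴. -/
noncomputable def grad (F : MvPolynomial (Fin 4) ℂ) (x : Fin 4 → ℂ) : Fin 4 → ℂ :=
  fun i => eval x (pderiv i F)


lemma evalH (x : Fin 4 → ℂ) : eval x H = 1 * (x 0) ^ 3 + (-3/2) * (x 0) * (x 1) ^ 2 + (1/2) * (x 1) ^ 3 + (1/2) * (x 2) ^ 2 + (-1/6) * (x 3) ^ 2 := by
  simp [H]; ring
lemma evalG (x : Fin 4 → ℂ) : eval x G = (-3/2) * (x 0) ^ 3 * (x 1) ^ 3 + (9/8) * (x 0) ^ 2 * (x 1) ^ 4 + (9/4) * (x 0) * (x 1) ^ 5 + (-15/8) * (x 1) ^ 6 + (-3/2) * (x 1) ^ 3 * (x 2) ^ 2 + (-3/2) * (x 0) * (x 1) ^ 2 * (x 2) * (x 3) + (-3/2) * (x 1) ^ 3 * (x 2) * (x 3) + (-1) * (x 0) ^ 2 * (x 1) * (x 3) ^ 2 + (-1) * (x 0) * (x 1) ^ 2 * (x 3) ^ 2 + (1/2) * (x 1) ^ 3 * (x 3) ^ 2 + (1/9) *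 (x 2) * (x 3) ^ 3 + (-1/18) * (x 3) ^ 4 := by
  simp [G]; ring
lemma gH0 (x : Fin 4 → ℂ) : grad H x 0 = 3 * (x 0) ^ 2 + (-3/2) * (x 1) ^ 2 := by
  simp [grad, H, pderiv_mul, pderiv_pow, pderiv_X, Pi.single_apply]; try ring
lemma gG0 (x : Fin 4 → ℂ) : grad G x 0 = (-9/2) * (x 0) ^ 2 * (x 1) ^ 3 + (9/4) * (x 0) * (x 1) ^ 4 + (9/4) * (x 1) ^ 5 + (-3/2) * (x 1) ^ 2 * (x 2) * (x 3) + (-2) * (x 0) * (x 1) * (x 3) ^ 2 + (-1) * (x 1) ^ 2 * (x 3) ^ 2 := by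
  simp [grad, G, pderiv_mul, pderiv_pow, pderiv_X, Pi.single_apply]; try ring
lemma gH1 (x : Fin 4 → ℂ) : grad H x 1 = (-3) * (x 0) * (x 1) + (3/2) * (x 1) ^ 2 := by
  simp [grad, H, pderiv_mul, pderiv_pow, pderiv_X, Pi.single_apply]; try ring
lemma gG1 (x : Fin 4 → ℂ) : grad G x 1 = (-9/2) * (x 0) ^ 3 * (x 1) ^ 2 + (9/2) * (x 0) ^ 2 * (x 1) ^ 3 + (45/4) * (x 0) * (x 1) ^ 4 + (-45/4) * (x 1) ^ 5 + (-9/2) * (x 1) ^ 2 * (x 2) ^ 2 + (-3) * (x 0) * (x 1) * (x 2) * (x 3) + (-9/2) * (x 1) ^ 2 * (x 2) * (x 3) + (-1) * (x 0) ^ 2 * (x 3) ^ 2 + (-2) * (x 0) * (x 1) * (x 3) ^ 2 + (3/2) * (x 1) ^ 2 * (x 3) ^ 2 := by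
  simp [grad, G, pderiv_mul, pderiv_pow, pderiv_X, Pi.single_apply]; try ring
lemma gH2 (x : Fin 4 → ℂ) : grad H x 2 = 1 * (x 2) := by
  simp [grad, H, pderiv_mul, pderiv_pow, pderiv_X, Pi.single_apply]; try ring
lemma gG2 (x : Fin 4 → ℂ) : grad G x 2 = (-3) * (x 1) ^ 3 * (x 2) + (-3/2) * (x 0) * (x 1) ^ 2 * (x 3) + (-3/2) * (x 1) ^ 3 * (x 3) + (1/9) * (x 3) ^ 3 := by
  simp [grad, G, pderiv_mul, pderiv_pow, pderiv_X, Pi.single_apply]; try ring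
lemma gH3 (x : Fin 4 → ℂ) : grad H x 3 = (-1/3) * (x 3) := by
  simp [grad, H, pderiv_mul, pderiv_pow, pderiv_X, Pi.single_apply]; try ring
lemma gG3 (x : Fin 4 → ℂ) : grad G x 3 = (-3/2) * (x 0) * (x 1) ^ 2 * (x 2) + (-3/2) * (x 1) ^ 3 * (x 2) + (-2) * (x 0) ^ 2 * (x 1) * (x 3) + (-2) * (x 0) * (x 1) ^ 2 * (x 3) + 1 * (x 1) ^ 3 * (x 3) + (1/3) * (x 2) * (x 3) ^ 2 + (-2/9) * (x 3) ^ 3 := by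
  simp [grad, G, pderiv_mul, pderiv_pow, pderiv_X, Pi.single_apply]; try ring

lemma minor_zero {s t vi wi vj wj : ℂ} (hst : s ≠ 0 ∨ t ≠ 0)
    (ei : s * vi + t * wi = 0) (ej : s * vj + t * wj = 0) :
    vi * wj - vj * wi = 0 := by
  rcases hst with hs | ht
  · have h2 : s * (vi * wj - vj * wi) = 0 := by linear_combination wj * ei - wi * ej
    exact (mul_eq_zero.mp h2).resolve_left hs
  · have h2 : t * (vi * wj - vj * wi) = 0 := by linear_combination vi * ej - vj * ei
    exact (mul_eq_zero.mp h2).resolve_left ht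
/-- if (3h² + 2g)·g ≠ 0 then the fibre F_{(h,g)} is smooth: at every
point of the fibre the gradients of H and G are linearly independent over ℂ. -/
theorem dgr_fibre_smooth (h g : ℂ) (hc : (3 * h ^ 2 + 2 * g) * g ≠ 0)
    (x : Fin 4 → ℂ) (hH : eval x H = h) (hG : eval x G = g) :
    LinearIndependent ℂ ![grad H x, grad G x] := by
  by_contra hli
  rw [LinearIndependent.pair_iff] at hli
  push_neg at hli
  obtain ⟨s, t, hst, hne⟩ := hli
  have hor : s ≠ 0 ∨ t ≠ 0 := by
    by_contra hcon
    push_neg at hcon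
    exact hne hcon.1 hcon.2
  have e : ∀ i, s * grad H x i + t * grad G x i = 0 := by
    intro i
    have := congrFun hst i
    simpa [Pi.add_apply, Pi.smul_apply, smul_eq_mul] using this
  have e0 : s * (3 * (x 0) ^ 2 + (-3/2) * (x 1) ^ 2) + t * ((-9/2) * (x 0) ^ 2 * (x 1) ^ 3 + (9/4) * (x 0) * (x 1) ^ 4 + (9/4) * (x 1) ^ 5 + (-3/2) * (x 1) ^ 2 * (x 2) * (x 3) + (-2) * (x 0) * (x 1) * (x 3) ^ 2 + (-1) * (x 1) ^ 2 * (x 3) ^ 2) = 0 := by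
    have := e 0; rwa [gH0, gG0] at this
  have e1 : s * ((-3) * (x 0) * (x 1) + (3/2) * (x 1) ^ 2) + t * ((-9/2) * (x 0) ^ 3 * (x 1) ^ 2 + (9/2) * (x 0) ^ 2 * (x 1) ^ 3 + (45/4) * (x 0) * (x 1) ^ 4 + (-45/4) * (x 1) ^ 5 + (-9/2) * (x 1) ^ 2 * (x 2) ^ 2 + (-3) * (x 0) * (x 1) * (x 2) * (x 3) + (-9/2) * (x 1) ^ 2 * (x 2) * (x 3) + (-1) * (x 0) ^ 2 * (x 3) ^ 2 + (-2) * (x 0) * (x 1) * (x 3) ^ 2 + (3/2) * (x 1) ^ 2 * (x 3) ^ 2) = 0 := by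
    have := e 1; rwa [gH1, gG1] at this
  have e2 : s * (1 * (x 2)) + t * ((-3) * (x 1) ^ 3 * (x 2) + (-3/2) * (x 0) * (x 1) ^ 2 * (x 3) + (-3/2) * (x 1) ^ 3 * (x 3) + (1/9) * (x 3) ^ 3) = 0 := by
    have := e 2; rwa [gH2, gG2] at this
  have e3 : s * ((-1/3) * (x 3)) + t * ((-3/2) * (x 0) * (x 1) ^ 2 * (x 2) + (-3/2) * (x 1) ^ 3 * (x 2) + (-2) * (x 0) ^ 2 * (x 1) * (x 3) + (-2) * (x 0) * (x 1) ^ 2 * (x 3) + 1 * (x 1) ^ 3 * (x 3) + (1/3) * (x 2) * (x 3) ^ 2 + (-2/9) * (x 3) ^ 3) = 0 := by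
    have := e 3; rwa [gH3, gG3] at this
  have m01 : (3 * (x 0) ^ 2 + (-3/2) * (x 1) ^ 2) * ((-9/2) * (x 0) ^ 3 * (x 1) ^ 2 + (9/2) * (x 0) ^ 2 * (x 1) ^ 3 + (45/4) * (x 0) * (x 1) ^ 4 + (-45/4) * (x 1) ^ 5 + (-9/2) * (x 1) ^ 2 * (x 2) ^ 2 + (-3) * (x 0) * (x 1) * (x 2) * (x 3) + (-9/2) * (x 1) ^ 2 * (x 2) * (x 3) + (-1) * (x 0) ^ 2 * (x 3) ^ 2 + (-2) * (x 0) * (x 1) * (x 3) ^ 2 + (3/2) * (x 1) ^ 2 * (x 3) ^ 2) - ((-3) * (x 0) * (x 1) + (3/2) * (x 1) ^ 2) * ((-9/2) * (x 0) ^ 2 * (x 1) ^ 3 + (9/4) * (x 0) * (x 1) ^ 4 + (9/4) * (x 1) ^ 5 + (-3/2) * (x 1) ^ 2 * (x 2) * (x 3) + (-2) * (x 0) * (x 1) * (x 3) ^ 2 + (-1) * (x 1) ^ 2 * (x 3) ^ 2) = 0 := minor_zero hor e0 e1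
  have m02 : (3 * (x 0) ^ 2 + (-3/2) * (x 1) ^ 2) * ((-3) * (x 1) ^ 3 * (x 2) + (-3/2) * (x 0) * (x 1) ^ 2 * (x 3) + (-3/2) * (x 1) ^ 3 * (x 3) + (1/9) * (x 3) ^ 3) - (1 * (x 2)) * ((-9/2) * (x 0) ^ 2 * (x 1) ^ 3 + (9/4) * (x 0) * (x 1) ^ 4 + (9/4) * (x 1) ^ 5 + (-3/2) * (x 1) ^ 2 * (x 2) * (x 3) + (-2) * (x 0) * (x 1) * (x 3) ^ 2 + (-1) * (x 1) ^ 2 * (x 3) ^ 2) = 0 := minor_zero hor e0 e2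
  have m03 : (3 * (x 0) ^ 2 + (-3/2) * (x 1) ^ 2) * ((-3/2) * (x 0) * (x 1) ^ 2 * (x 2) + (-3/2) * (x 1) ^ 3 * (x 2) + (-2) * (x 0) ^ 2 * (x 1) * (x 3) + (-2) * (x 0) * (x 1) ^ 2 * (x 3) + 1 * (x 1) ^ 3 * (x 3) + (1/3) * (x 2) * (x 3) ^ 2 + (-2/9) * (x 3) ^ 3) - ((-1/3) * (x 3)) * ((-9/2) * (x 0) ^ 2 * (x 1) ^ 3 + (9/4) * (x 0) * (x 1) ^ 4 + (9/4) * (x 1) ^ 5 + (-3/2) * (x 1) ^ 2 * (x 2) * (x 3) + (-2) * (x 0) * (x 1) * (x 3) ^ 2 + (-1) * (x 1) ^ 2 * (x 3) ^ 2) = 0 := minor_zero hor e0 e3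
  have m12 : ((-3) * (x 0) * (x 1) + (3/2) * (x 1) ^ 2) * ((-3) * (x 1) ^ 3 * (x 2) + (-3/2) * (x 0) * (x 1) ^ 2 * (x 3) + (-3/2) * (x 1) ^ 3 * (x 3) + (1/9) * (x 3) ^ 3) - (1 * (x 2)) * ((-9/2) * (x 0) ^ 3 * (x 1) ^ 2 + (9/2) * (x 0) ^ 2 * (x 1) ^ 3 + (45/4) * (x 0) * (x 1) ^ 4 + (-45/4) * (x 1) ^ 5 + (-9/2) * (x 1) ^ 2 * (x 2) ^ 2 + (-3) * (x 0) * (x 1) * (x 2) * (x 3) + (-9/2) * (x 1) ^ 2 * (x 2) * (x 3) + (-1) * (x 0) ^ 2 * (x 3) ^ 2 + (-2) * (x 0) * (x 1) * (x 3) ^ 2 + (3/2) * (x 1) ^ 2 * (x 3) ^ 2) = 0 := minor_zero hor e1 e2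
  have m23 : (1 * (x 2)) * ((-3/2) * (x 0) * (x 1) ^ 2 * (x 2) + (-3/2) * (x 1) ^ 3 * (x 2) + (-2) * (x 0) ^ 2 * (x 1) * (x 3) + (-2) * (x 0) * (x 1) ^ 2 * (x 3) + 1 * (x 1) ^ 3 * (x 3) + (1/3) * (x 2) * (x 3) ^ 2 + (-2/9) * (x 3) ^ 3) - ((-1/3) * (x 3)) * ((-3) * (x 1) ^ 3 * (x 2) + (-3/2) * (x 0) * (x 1) ^ 2 * (x 3) + (-3/2) * (x 1) ^ 3 * (x 3) + (1/9) * (x 3) ^ 3) = 0 := minor_zero hor e2 e3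
  apply hc
  rw [← hH, ← hG, evalH, evalG]
  linear_combination ((1/3) * (x 0) ^ 4 * (x 1) + (1/12) * (x 0) ^ 3 * (x 1) ^ 2 + (-3/4) * (x 0) ^ 2 * (x 1) ^ 3 + (-1/12) * (x 0) * (x 1) ^ 4 + (5/12) * (x 1) ^ 5 + (1/3) * (x 0) * (x 1) * (x 2) ^ 2 + (1/9) * (x 0) ^ 2 * (x 2) * (x 3) + (1/18) * (x 0) * (x 1) * (x 2) * (x 3) + (1/9) * (x 1) ^ 2 * (x 2) * (x 3) + (11/54) * (x 0) ^ 2 * (x 3) ^ 2 + (-7/27) * (x 0) * (x 1) * (x 3) ^ 2 + (-25/72) * (x 1) ^ 2 * (x 3) ^ 2) * m01 + ((-5/4) * (x 0) ^ 2 * (x 1) ^ 2 * (x 2) + (-17/8) * (x 0) * (x 1) ^ 3 * (x 2) + (19/16) * (x 1) ^ 4 * (x 2) + 2 * (x 0) ^ 4 * (x 3) + (2/3) * (x 0) ^ 3 * (x 1) * (x 3) + (-29/24) * (x 0) ^ 2 * (x 1) ^ 2 * (x 3) + (5/12) * (x 0) * (x 1) ^ 3 * (x 3) + (43/48) * (x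 1) ^ 4 * (x 3) + (-3/4) * (x 0) * (x 2) ^ 3 + (-5/16) * (x 1) * (x 2) ^ 3 + (9/16) * (x 0) * (x 2) ^ 2 * (x 3) + (-37/96) * (x 1) * (x 2) ^ 2 * (x 3) + (511/288) * (x 0) * (x 2) * (x 3) ^ 2 + (371/576) * (x 1) * (x 2) * (x 3) ^ 2 + (5/144) * (x 0) * (x 3) ^ 3 + (-511/864) * (x 1) * (x 3) ^ 3) * m02 + ((9/4) * (x 1) ^ 4 * (x 2) + (1/3) * (x 0) ^ 4 * (x 3) + (-13/6) * (x 0) ^ 3 * (x 1) * (x 3) + (1/2) * (x 0) * (x 1) ^ 3 * (x 3) + (-17/48) * (x 1) ^ 4 * (x 3) + (3/4) * (x 1) * (x 2) ^ 3 + (-1/4) * (x 0) * (x 2) ^ 2 * (x 3) + (-9/16) * (x 1) * (x 2) ^ 2 * (x 3) + (-11/48) * (x 0) * (x 2) * (x 3) ^ 2 + (-173/96) * (x 1) * (x 2) * (x 3) ^ 2 + (-1/54) * (x 0) * (x 3) ^ 3 + (-7/54) * (x 1) * (x 3) ^ 3) * m03 + ((-3/4) * (x 1) ^ 4 * (x 2)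 + (1/3) * (x 0) ^ 4 * (x 3) + (1/2) * (x 0) ^ 3 * (x 1) * (x 3) + (-1/6) * (x 0) * (x 1) ^ 3 * (x 3) + (7/48) * (x 1) ^ 4 * (x 3) + (-1/4) * (x 1) * (x 2) ^ 3 + (1/4) * (x 0) * (x 2) ^ 2 * (x 3) + (3/16) * (x 1) * (x 2) ^ 2 * (x 3) + (-3/16) * (x 0) * (x 2) * (x 3) ^ 2 + (173/288) * (x 1) * (x 2) * (x 3) ^ 2 + (-205/288) * (x 0) * (x 3) ^ 3 + (-293/576) * (x 1) * (x 3) ^ 3) * m12 + ((-39/32) * (x 1) ^ 6 + (-105/32) * (x 1) ^ 3 * (x 2) ^ 2 + (7/4) * (x 0) ^ 3 * (x 2) * (x 3) + (1/8) * (x 0) * (x 1) ^ 2 * (x 2) * (x 3) + (-363/64) * (x 1) ^ 3 * (x 2) * (x 3) + (41/48) * (x 0) ^ 3 * (x 3) ^ 2 + (-143/96) * (x 0) * (x 1) ^ 2 * (x 3) ^ 2 + (-359/384) * (x 1) ^ 3 * (x 3) ^ 2 + (1/4) * (x 2) ^ 3 * (x 3) + (1/24) * (x 2) ^ 2 * (x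 3) ^ 2 + (-1/6) * (x 2) * (x 3) ^ 3 + (1/24) * (x 3) ^ 4) * m23
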